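/- arXiv:2505.17288 — 5 statements merged into one kernel-verified Lean document; each statement's English description precedes it below -/
import Mathlib

section
/- For a class F of next-token predictors with VC dimension d, the growth function of the induced autoregressive 0-1 loss class L(F^AR) = { (x,y) ↦ 1{y ≠ f^AR(x)} : f ∈ F } satisfies Γ_{L(F^AR)}(n) ≤ Γ_F(nT) ≤ (e n T / d)^d for nT ≥ d, and consequently VC(L(F^AR)) ≤ 3 d log₂(2T / log 2) = O(d log T). -/
/-- Autoregressive unrolling of a next-token predictor. -/
def arList (f : List Bool → Bool) (x : List Bool) : ℕ → List Bool
  | 0 => []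
  | T + 1 => arList f x T ++ [f (x ++ arList f x T)]

/-- The set of labelings a binary class realizes on `n` points. -/
def labelings {α : Type*} (H : Set (α → Bool)) {n : ℕ} (xs : Fin n → α) :
    Set (Fin n → Bool) :=
  {v | ∃ h ∈ H, ∀ i, v i = h (xs i)}

/-- Growth function of a binary class. -/
noncomputable def growth {α : Type*} (H : Set (α → Bool)) (n : ℕ) : ℕ :=
  sSup {k | ∃ xs : Fin n → α, k = (labelings H xs).ncard}

/-- `H` shatters the points `xs`. -/
def Shatters {α : Type*} (H : Set (α → Bool)) {n : ℕ} (xs : Fin n → α) : Prop :=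
  ∀ v : Fin n → Bool, ∃ h ∈ H, ∀ i, h (xs i) = v i

/-- The VC dimension of `H` is at most `d`. -/
def VCdimLe {α : Type*} (H : Set (α → Bool)) (d : ℕ) : Prop :=
  ∀ n (xs : Fin n → α), Shatters H xs → n ≤ d

/-- The autoregressive 0-1 loss class `L(F^AR) = {(x,y) ↦ 1{y ≠ f^AR(x)} : f ∈ F}`. -/
def lossClass (F : Set (List Bool → Bool)) (T : ℕ) :
    Set (List Bool × List Bool → Bool) :=
  {g | ∃ f ∈ F, g = fun p => decide (p.2 ≠ arList f p.1 T)}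

/-!
A predictor `f` incurs no loss on `(x, y)` iff `y` has length `T` and `f (x ++ y.take t) = y[t]`
for every `t < T`; so the loss labels of `f` on `n` pairs are determined by its predictions on the
`n * T` prefixes `x ++ y.take t`, and `Γ_{L(F^AR)}(n) ≤ Γ_F(nT)`. Sauer–Shelah together with
`∑_{k ≤ d} C(m, k) ≤ (e m / d)^d` gives the second bound. If the loss class shatters `m` points then
`2^m ≤ (e m T / d)^d`; taking logarithms and using `log (e u) ≤ u` gives `m ≤ 2 d log₂(2T / log 2)`.
-/

lemma arList_length (f : List Bool → Bool) (x : List Bool) (T : ℕ) :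
    (arList f x T).length = T := by
  induction T with
  | zero => rfl
  | succ T ih => simp [arList, ih]

lemma arList_prefix (f : List Bool → Bool) (x : List Bool) {t T : ℕ} (htT : t ≤ T) :
    arList f x t <+: arList f x T := by
  induction T, htT using Nat.le_induction with
  | base => exact List.prefix_refl _
  | succ T _ ih => exact ih.trans (List.prefix_append _ _)

lemma arList_eq_take (f : List Bool → Bool) (x : List Bool) {t T : ℕ} (htT : t ≤ T) :
    arList f x t = (arList f x T).take t := by
  simpa only [arList_length] using List.prefix_iff_eq_take.mp (arList_prefix f x htT)

lemma arList_eq_of_eqOn_prefixes {f g : List Bool → Bool} {x y : List Bool} {T : ℕ}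
    (hy : arList f x T = y) (hfg : ∀ t < T, f (x ++ y.take t) = g (x ++ y.take t)) :
    arList g x T = y := by
  suffices h : ∀ t ≤ T, arList f x t = arList g x t by rw [← h T le_rfl, hy]
  intro t ht
  induction t with
  | zero => rfl
  | succ t ih =>
    have hprefix : arList f x t = y.take t := hy ▸ arList_eq_take f x (by omega)
    rw [arList, arList, ← ih (by omega), hprefix, hfg t (by omega)]

lemma ncard_labelings_le_growth {α : Type*} (H : Set (α → Bool)) {n : ℕ} (xs : Fin n → α) :
    (labelings H xs).ncard ≤ growth H n := by
  refine le_csSup ⟨Nat.card (Fin n → Bool), ?_⟩ ⟨xs, rfl⟩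
  rintro k ⟨ys, rfl⟩
  exact Set.ncard_le_card _

lemma growth_le {α : Type*} {H : Set (α → Bool)} {n m : ℕ}
    (hH : ∀ xs : Fin n → α, (labelings H xs).ncard ≤ m) : growth H n ≤ m :=
  csSup_le' fun _ ⟨xs, hk⟩ => hk ▸ hH xs

lemma Shatters.ncard_labelings_eq {α : Type*} {H : Set (α → Bool)} {n : ℕ} {xs : Fin n → α}
    (hxs : Shatters H xs) : (labelings H xs).ncard = 2 ^ n := by
  have huniv : labelings H xs = Set.univ := Set.eq_univ_of_forall fun v =>
    let ⟨h, hH, hv⟩ := hxs v; ⟨h, hH, fun i => (hv i).symm⟩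
  simp [huniv, Set.ncard_univ]

lemma ncard_labelings_image_le {α β : Type*} {H : Set (α → Bool)} (φ : (α → Bool) → β → Bool)
    {n m : ℕ} (zs : Fin n → β) (xs : Fin m → α)
    (hφ : ∀ h₁ ∈ H, ∀ h₂ ∈ H, (∀ j, h₁ (xs j) = h₂ (xs j)) → ∀ i, φ h₁ (zs i) = φ h₂ (zs i)) :
    (labelings (φ '' H) zs).ncard ≤ (labelings H xs).ncard := by
  have hpick : ∀ v ∈ labelings (φ '' H) zs, ∃ h ∈ H, ∀ i, v i = φ h (zs i) := by
    rintro v ⟨_, ⟨h, hH, rfl⟩, hv⟩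
    exact ⟨h, hH, hv⟩
  choose! pick hpickH hpick using hpick
  refine Set.ncard_le_ncard_of_injOn (fun v j => pick v (xs j))
    (fun v hv => ⟨pick v, hpickH v hv, fun _ => rfl⟩) ?_
  intro v hv w hw hvw
  funext i
  rw [hpick v hv, hpick w hw]
  exact hφ _ (hpickH v hv) _ (hpickH w hw) (fun j => congrFun hvw j) i

lemma lossClass_eq_image (F : Set (List Bool → Bool)) (T : ℕ) :
    lossClass F T = (fun f p => decide (p.2 ≠ arList f p.1 T)) '' F := by
  ext g
  exact ⟨fun ⟨f, hf, hg⟩ => ⟨f, hf, hg.symm⟩, fun ⟨f, hf, hg⟩ => ⟨f, hf, hg.symm⟩⟩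

lemma growth_lossClass_le_growth_mul (F : Set (List Bool → Bool)) (T n : ℕ) :
    growth (lossClass F T) n ≤ growth F (n * T) := by
  refine growth_le fun zs => ?_
  let prefixes (k : Fin (n * T)) : List Bool :=
    let (i, t) := finProdFinEquiv.symm k
    (zs i).1 ++ (zs i).2.take t
  refine (lossClass_eq_image F T ▸ ncard_labelings_image_le _ zs prefixes ?_).trans
    (ncard_labelings_le_growth F prefixes)
  intro f _ g _ hfg i
  have hfg' : ∀ t < T, f ((zs i).1 ++ (zs i).2.take t) = g ((zs i).1 ++ (zs i).2.take t) := by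
    intro t ht
    simpa only [prefixes, Equiv.symm_apply_apply] using hfg (finProdFinEquiv (i, ⟨t, ht⟩))
  have hiff : (zs i).2 = arList f (zs i).1 T ↔ (zs i).2 = arList g (zs i).1 T :=
    ⟨fun h => (arList_eq_of_eqOn_prefixes h.symm hfg').symm,
     fun h => (arList_eq_of_eqOn_prefixes h.symm fun t ht => (hfg' t ht).symm).symm⟩
  simp only [ne_eq, hiff]

section Sauer

open Finset

variable {α : Type*} {m : ℕ}

/-- Labelings as subsets of `Fin m`, so that Mathlib's `Finset.vcDim` and Sauer–Shelah apply. -/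
noncomputable def labelingSupports (H : Set (α → Bool)) (xs : Fin m → α) :
    Finset (Finset (Fin m)) :=
  (Set.toFinite (labelings H xs)).toFinset.image fun v => univ.filter (v · = true)

lemma card_labelingSupports (H : Set (α → Bool)) (xs : Fin m → α) :
    #(labelingSupports H xs) = (labelings H xs).ncard := by
  rw [labelingSupports, card_image_of_injective, Set.ncard_eq_toFinset_card]
  intro v w hvw
  funext i
  have hi := congrArg (i ∈ ·) hvw
  simp only [mem_filter, mem_univ, true_and, eq_iff_iff] at hi
  exact Bool.eq_iff_iff.mpr hi

lemma vcDim_labelingSupports_le {H : Set (α → Bool)} {d : ℕ} (hH : VCdimLe H d)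
    (xs : Fin m → α) :
    (labelingSupports H xs).vcDim ≤ d := by
  refine Finset.sup_le fun s hs => hH #s (fun j => xs (s.equivFin.symm j)) fun v => ?_
  let target : Finset (Fin m) :=
    s.filter fun i => ∃ hi : i ∈ s, v (s.equivFin ⟨i, hi⟩) = true
  obtain ⟨u, hu, hsu⟩ := mem_shatterer.mp hs (filter_subset _ s : target ⊆ s)
  obtain ⟨w, hw, rfl⟩ := mem_image.mp hu
  obtain ⟨h, hH, hwh⟩ := (Set.Finite.mem_toFinset _).mp hw
  refine ⟨h, hH, fun j => ?_⟩
  have hmem := congrArg ((s.equivFin.symm j : Fin m) ∈ ·) hsu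
  rw [← hwh, Bool.eq_iff_iff]
  simpa [target, (s.equivFin.symm j).2] using hmem

lemma ncard_labelings_le_sum_choose {H : Set (α → Bool)} {d : ℕ} (hH : VCdimLe H d)
    (xs : Fin m → α) :
    (labelings H xs).ncard ≤ ∑ k ∈ Iic d, m.choose k :=
  calc (labelings H xs).ncard = #(labelingSupports H xs) := (card_labelingSupports H xs).symm
    _ ≤ #(labelingSupports H xs).shatterer := card_le_card_shatterer _
    _ ≤ ∑ k ∈ Iic (labelingSupports H xs).vcDim, (Fintype.card (Fin m)).choose k :=
      card_shatterer_le_sum_vcDim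
    _ ≤ ∑ k ∈ Iic d, m.choose k := by
      rw [Fintype.card_fin]
      exact sum_le_sum_of_subset (Iic_subset_Iic.mpr (vcDim_labelingSupports_le hH xs))

end Sauer

section Estimates

open Finset Real

lemma sum_choose_le_exp_mul_div_pow {d m : ℕ} (hd : 0 < d) (hdm : d ≤ m) :
    ((∑ k ∈ Iic d, m.choose k : ℕ) : ℝ) ≤ (exp 1 * m / d) ^ d := by
  have hm : (0 : ℝ) < m := by exact_mod_cast hd.trans_le hdm
  set r : ℝ := d / m with hr_def
  have hr : 0 < r := by positivity
  have hr1 : r ≤ 1 := div_le_one_of_le₀ (by exact_mod_cast hdm) hm.le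
  -- weight the `k`-th term by `r ^ k ≥ r ^ d`; complete to the expansion of `(1 + r) ^ m`
  have hweighted : (∑ k ∈ Iic d, (m.choose k : ℝ)) * r ^ d ≤ exp d :=
    calc (∑ k ∈ Iic d, (m.choose k : ℝ)) * r ^ d
        ≤ ∑ k ∈ Iic d, (m.choose k : ℝ) * r ^ k := by
          rw [sum_mul]
          refine sum_le_sum fun k hk => mul_le_mul_of_nonneg_left ?_ (by positivity)
          exact pow_le_pow_of_le_one hr.le hr1 (mem_Iic.mp hk)
      _ ≤ ∑ k ∈ range (m + 1), (m.choose k : ℝ) * r ^ k := by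
          refine sum_le_sum_of_subset_of_nonneg (fun k hk => ?_) (fun _ _ _ => by positivity)
          rw [mem_range]
          exact Nat.lt_succ_of_le ((mem_Iic.mp hk).trans hdm)
      _ = (r + 1) ^ m := by simp [add_pow, mul_comm]
      _ ≤ exp r ^ m := by gcongr; exact add_one_le_exp r
      _ = exp d := by rw [← exp_nat_mul, hr_def, mul_div_cancel₀ _ hm.ne']
  have hbound : (exp 1 * m / d) ^ d = exp d / r ^ d := by
    rw [← exp_one_pow, eq_div_iff (by positivity), ← mul_pow, hr_def]
    congr 1
    field_simp
  rw [hbound, le_div_iff₀ (by positivity)]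
  exact_mod_cast hweighted

lemma growth_le_exp_mul_div_pow {α : Type*} {H : Set (α → Bool)} {d m : ℕ} (hH : VCdimLe H d)
    (hd : 0 < d) (hdm : d ≤ m) : (growth H m : ℝ) ≤ (exp 1 * m / d) ^ d :=
  (Nat.cast_le.mpr (growth_le (ncard_labelings_le_sum_choose hH))).trans
    (sum_choose_le_exp_mul_div_pow hd hdm)

lemma one_le_logb_two_mul_div_log_two {T : ℕ} (hT : 1 ≤ T) : 1 ≤ logb 2 (2 * T / log 2) := by
  have hl2 : 0 < log 2 := log_pos one_lt_two
  have hT' : (1 : ℝ) ≤ T := by exact_mod_cast hT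
  rw [le_logb_iff_rpow_le one_lt_two (by positivity), rpow_one, le_div_iff₀ hl2]
  nlinarith [log_two_lt_d9]

lemma le_three_mul_logb_of_two_pow_le {T d m : ℕ} (hd : 0 < d) (hT : 1 ≤ T) (hm : 0 < m)
    (h : (2 : ℝ) ^ m ≤ (exp 1 * m * T / d) ^ d) :
    (m : ℝ) ≤ 3 * d * logb 2 (2 * T / log 2) := by
  have hl2 : 0 < log 2 := log_pos one_lt_two
  have hlogb := one_le_logb_two_mul_div_log_two hT
  set c : ℝ := 2 * T / log 2 with hc
  -- `u` is chosen so that `d * u` absorbs half of `m * log 2`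
  set u : ℝ := m * log 2 / (2 * d) with hu_def
  have hu : 0 < u := by positivity
  have hlog_eu : log (exp 1 * u) ≤ u := by
    rw [log_mul (exp_pos 1).ne' hu.ne', log_exp]
    linarith [log_le_sub_one_of_pos hu]
  have hsplit : exp 1 * m * T / d = c * (exp 1 * u) := by
    rw [hc, hu_def]
    field_simp
  have hlog : m * log 2 ≤ d * (log c + log (exp 1 * u)) := by
    have := log_le_log (by positivity) h
    rwa [log_pow, log_pow, hsplit, log_mul (by positivity) (by positivity)] at this
  have hdu : d * u = m * log 2 / 2 := by
    rw [hu_def]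
    field_simp
  have hmain : (m : ℝ) ≤ 2 * d * logb 2 c := by
    rw [logb, mul_div_assoc', le_div_iff₀ hl2]
    nlinarith [mul_le_mul_of_nonneg_left hlog_eu (Nat.cast_nonneg (α := ℝ) d)]
  nlinarith [(Nat.cast_nonneg (α := ℝ) d)]

end Estimates

theorem growth_loss_class_le_general (T d n : ℕ) (hd : 1 ≤ d) (hT : 1 ≤ T)
    (F : Set (List Bool → Bool))
    (hVCub : VCdimLe F d)
    (hn : d ≤ n * T) :
    growth (lossClass F T) n ≤ growth F (n * T) ∧
    (growth F (n * T) : ℝ) ≤ (Real.exp 1 * n * T / d) ^ d ∧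
    ∀ m (zs : Fin m → List Bool × List Bool), Shatters (lossClass F T) zs →
      (m : ℝ) ≤ 3 * d * Real.logb 2 (2 * T / Real.log 2) := by
  have hsauer : ∀ k, d ≤ k * T → (growth F (k * T) : ℝ) ≤ (Real.exp 1 * k * T / d) ^ d := by
    intro k hk
    simpa [mul_assoc] using growth_le_exp_mul_div_pow hVCub hd hk
  refine ⟨growth_lossClass_le_growth_mul F T n, hsauer n hn, fun m zs hzs => ?_⟩
  rcases le_or_gt d (m * T) with hdm | hmd
  · have hm : 0 < m := Nat.pos_of_ne_zero (by rintro rfl; omega)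
    refine le_three_mul_logb_of_two_pow_le hd hT hm ?_
    calc (2 : ℝ) ^ m = (labelings (lossClass F T) zs).ncard := by
          rw [hzs.ncard_labelings_eq, Nat.cast_pow, Nat.cast_ofNat]
      _ ≤ growth F (m * T) := by
          exact_mod_cast (ncard_labelings_le_growth _ zs).trans
            (growth_lossClass_le_growth_mul F T m)
      _ ≤ _ := hsauer m hdm
  · have hmd : (m : ℝ) ≤ d := by exact_mod_cast (Nat.le_mul_of_pos_right m hT).trans hmd.le
    nlinarith [one_le_logb_two_mul_div_log_two hT]

/-- growth-function bound `Γ_{L(F^AR)}(n) ≤ Γ_F(nT) ≤ (enT/d)^d`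
for `nT ≥ d`, and the consequent VC bound `VC(L(F^AR)) ≤ 3 d log₂(2T / log 2)`. -/
theorem growth_loss_class_le (T d n : ℕ) (hd : 1 ≤ d) (hT : 1 ≤ T)
    (F : Set (List Bool → Bool))
    (hVCub : VCdimLe F d) (hVClb : ∃ xs : Fin d → List Bool, Shatters F xs)
    (hn : d ≤ n * T) :
    growth (lossClass F T) n ≤ growth F (n * T) ∧
    (growth F (n * T) : ℝ) ≤ (Real.exp 1 * n * T / d) ^ d ∧
    ∀ m (zs : Fin m → List Bool × List Bool), Shatters (lossClass F T) zs →
      (m : ℝ) ≤ 3 * d * Real.logb 2 (2 * T / Real.log 2) :=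
  growth_loss_class_le_general T d n hd hT F hVCub hn
end

section
/- Let r : X × Y → [0,1] be a reward function with a σ-margin: for every x, max over the argmax set Y*(x) exceeds the maximum of r(x,·) over Y \ Y*(x) by more than σ > 0. Let π₀(·|x) be a base distribution over Y, P₀(x) = P_{y∼π₀(·|x)}(y ∈ Y*(x)), and let r̂ be any estimated reward with δ(x,y) = r̂(x,y) − r(x,y). Let π_BoN draw N i.i.d. samples y₁,...,y_N ∼ π₀(·|x) and output an argmax of r̂(x,·) among them. Then E_x E_{y ∼ π_BoN(·|x)} 1{y ∈ Y*(x)} ≥ 1 − (2N/σ) · E_{x, y ∼ P_x × π₀(·|x)} |δ(x,y)| − E_x (1 − P₀(x))^N. -/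
/-!
If BoN returns a response outside `Y*(x)` although some sample lies in `Y*(x)`, the margin
forces `σ < |δ(x, ŷ)| + |δ(x, y)|` for the returned `ŷ` and that sample `y`, so one of the `N`
samples has `|δ| ≥ σ/2`. Hence failure implies either an error of size `σ/2` at some sample,
whose probability is at most `N · (2/σ) E|δ|` by a union bound and Markov, or no sample in
`Y*(x)`, of probability `(1 - P₀(x))^N`.
-/

open Finset

section Margin

variable {Y : Type*} {r rhat : Y → ℝ} {σ : ℝ}

lemma half_le_abs_sub_or_half_le_abs_sub_of_margin {y y' : Y} (hmargin : r y' + σ < r y)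
    (hle : rhat y ≤ rhat y') : σ / 2 ≤ |rhat y' - r y'| ∨ σ / 2 ≤ |rhat y - r y| := by
  by_contra! h
  have h₁ := abs_lt.mp h.1
  have h₂ := abs_lt.mp h.2
  linarith [h₁.2, h₂.1]

variable {N : ℕ}

open scoped Classical in
lemma one_sub_ite_mem_le_of_margin {A : Set Y}
    (hmargin : ∀ y ∈ A, ∀ y', y' ∉ A → r y' + σ < r y) (ys : Fin N → Y) {s : Y}
    (hs : ∃ j, s = ys j) (hmax : ∀ j, rhat (ys j) ≤ rhat s) :
    1 - (if s ∈ A then (1 : ℝ) else 0) ≤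
      (∑ j, if σ / 2 ≤ |rhat (ys j) - r (ys j)| then (1 : ℝ) else 0) +
        ∏ j, if ys j ∈ A then (0 : ℝ) else 1 := by
  have hbad_nonneg : 0 ≤ ∑ j, if σ / 2 ≤ |rhat (ys j) - r (ys j)| then (1 : ℝ) else 0 :=
    sum_nonneg fun _ _ => by split_ifs <;> norm_num
  have hmiss_nonneg : 0 ≤ ∏ j, if ys j ∈ A then (0 : ℝ) else 1 :=
    prod_nonneg fun _ _ => by split_ifs <;> norm_num
  by_cases hsA : s ∈ A
  · rw [if_pos hsA]
    linarith
  rw [if_neg hsA]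
  obtain ⟨j, hj⟩ | hcov := em (∃ j, ys j ∈ A)
  · obtain ⟨j₀, rfl⟩ := hs
    obtain ⟨k, hk⟩ : ∃ k, σ / 2 ≤ |rhat (ys k) - r (ys k)| :=
      (half_le_abs_sub_or_half_le_abs_sub_of_margin (hmargin _ hj _ hsA) (hmax j)).elim
        (fun h => ⟨j₀, h⟩) (fun h => ⟨j, h⟩)
    have hbad : (1 : ℝ) ≤ ∑ j, if σ / 2 ≤ |rhat (ys j) - r (ys j)| then (1 : ℝ) else 0 := by
      simpa [hk] using
        single_le_sum (f := fun j => if σ / 2 ≤ |rhat (ys j) - r (ys j)| then (1 : ℝ) else 0)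
          (fun _ _ => by split_ifs <;> norm_num) (mem_univ k)
    linarith
  · rw [prod_eq_one fun j _ => if_neg (not_exists.mp hcov j)]
    linarith

end Margin

section IndependentSamples

variable {Y : Type*} [Fintype Y] {N : ℕ} (π : Y → ℝ)

lemma sum_prod_mul_prod (g : Fin N → Y → ℝ) :
    ∑ ys : Fin N → Y, (∏ j, π (ys j)) * ∏ j, g j (ys j) = ∏ j, ∑ y, π y * g j y := by
  simp_rw [← prod_mul_distrib]
  exact (Fintype.prod_sum fun j y => π y * g j y).symm

variable {π}

lemma sum_prod_eq_one (hπ : ∑ y, π y = 1) : ∑ ys : Fin N → Y, ∏ j, π (ys j) = 1 := by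
  simpa [hπ] using sum_prod_mul_prod π fun (_ : Fin N) _ => (1 : ℝ)

lemma sum_prod_mul_apply (hπ : ∑ y, π y = 1) (g : Y → ℝ) (j : Fin N) :
    ∑ ys : Fin N → Y, (∏ k, π (ys k)) * g (ys j) = ∑ y, π y * g y := by
  calc ∑ ys : Fin N → Y, (∏ k, π (ys k)) * g (ys j)
      = ∑ ys : Fin N → Y, (∏ k, π (ys k)) * ∏ k, if k = j then g (ys k) else 1 := by
        simp
    _ = ∏ k, ∑ y, π y * if k = j then g y else 1 :=
        sum_prod_mul_prod π fun k y => if k = j then g y else 1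
    _ = ∑ y, π y * g y := by
        rw [prod_eq_single j (fun k _ hk => by simp [hk, hπ]) (by simp)]
        simp

end IndependentSamples

lemma sum_mul_ite_le_le_sum_mul_div {Y : Type*} [Fintype Y] {w f : Y → ℝ} {c : ℝ}
    (hw : ∀ y, 0 ≤ w y) (hf : ∀ y, 0 ≤ f y) (hc : 0 < c) :
    ∑ y, w y * (if c ≤ f y then 1 else 0) ≤ (∑ y, w y * f y) / c := by
  rw [sum_div]
  gcongr with y
  split_ifs with h
  · rw [mul_one, le_div_iff₀ hc]
    exact mul_le_mul_of_nonneg_left h (hw y)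
  · rw [mul_zero]
    exact div_nonneg (mul_nonneg (hw y) (hf y)) hc.le

open scoped Classical in
theorem one_sub_le_bestOfN_prob_mem {Y : Type*} [Fintype Y] {π : Y → ℝ}
    (hπ0 : ∀ y, 0 ≤ π y) (hπ1 : ∑ y, π y = 1) {r rhat : Y → ℝ} {σ : ℝ} (hσ : 0 < σ)
    {A : Set Y} (hmargin : ∀ y ∈ A, ∀ y', y' ∉ A → r y' + σ < r y) {N : ℕ}
    (sel : (Fin N → Y) → Y)
    (hsel : ∀ ys, (∃ j, sel ys = ys j) ∧ ∀ j, rhat (ys j) ≤ rhat (sel ys)) :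
    1 - ((2 * N / σ) * (∑ y, π y * |rhat y - r y|) +
        (1 - ∑ y ∈ univ.filter (· ∈ A), π y) ^ N) ≤
      ∑ ys : Fin N → Y, (∏ j, π (ys j)) * (if sel ys ∈ A then (1 : ℝ) else 0) := by
  set bad : Y → ℝ := fun y => if σ / 2 ≤ |rhat y - r y| then 1 else 0
  set miss : Y → ℝ := fun y => if y ∈ A then 0 else 1
  have hfail : ∑ ys : Fin N → Y, (∏ j, π (ys j)) * (1 - if sel ys ∈ A then (1 : ℝ) else 0) ≤
      N * ∑ y, π y * bad y + (∑ y, π y * miss y) ^ N :=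
    calc _ ≤ ∑ ys : Fin N → Y, (∏ j, π (ys j)) * ((∑ j, bad (ys j)) + ∏ j, miss (ys j)) :=
          sum_le_sum fun ys _ => mul_le_mul_of_nonneg_left
            (one_sub_ite_mem_le_of_margin hmargin ys (hsel ys).1 (hsel ys).2)
            (prod_nonneg fun j _ => hπ0 (ys j))
      _ = ∑ j : Fin N, ∑ ys : Fin N → Y, (∏ k, π (ys k)) * bad (ys j) +
            ∑ ys : Fin N → Y, (∏ j, π (ys j)) * ∏ j, miss (ys j) := by
          simp_rw [mul_add, mul_sum]
          rw [sum_add_distrib, sum_comm]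
      _ = _ := by
          simp [sum_prod_mul_apply hπ1, sum_prod_mul_prod]
  have hsuccess : ∑ ys : Fin N → Y, (∏ j, π (ys j)) * (1 - if sel ys ∈ A then (1 : ℝ) else 0) =
      1 - ∑ ys : Fin N → Y, (∏ j, π (ys j)) * (if sel ys ∈ A then (1 : ℝ) else 0) := by
    simp_rw [mul_sub, mul_one]
    rw [sum_sub_distrib, sum_prod_eq_one hπ1]
  have hmarkov : N * ∑ y, π y * bad y ≤ 2 * N / σ * ∑ y, π y * |rhat y - r y| :=
    calc _ ≤ N * ((∑ y, π y * |rhat y - r y|) / (σ / 2)) := by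
          gcongr
          exact sum_mul_ite_le_le_sum_mul_div hπ0 (fun _ => abs_nonneg _) (half_pos hσ)
      _ = _ := by field_simp
  have hcoverage : ∑ y, π y * miss y = 1 - ∑ y ∈ univ.filter (· ∈ A), π y := by
    rw [sum_filter, ← hπ1, ← sum_sub_distrib]
    refine sum_congr rfl fun y _ => ?_
    by_cases hy : y ∈ A <;> simp [miss, hy]
  rw [hsuccess, hcoverage] at hfail
  linarith

open Classical in
theorem best_of_n_general_bound_general
    {X Y : Type*} [Fintype X] [Fintype Y]
    (Px : X → ℝ) (hPx0 : ∀ x, 0 ≤ Px x) (hPx1 : ∑ x, Px x = 1)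
    (π₀ : X → Y → ℝ) (hπ0 : ∀ x y, 0 ≤ π₀ x y) (hπ1 : ∀ x, ∑ y, π₀ x y = 1)
    (r rhat : X → Y → ℝ)
    (σ : ℝ) (hσ : 0 < σ)
    (Ystar : X → Set Y)
    (hmargin : ∀ x, ∀ y ∈ Ystar x, ∀ y', y' ∉ Ystar x → r x y' + σ < r x y)
    (N : ℕ)
    (sel : X → (Fin N → Y) → Y)
    (hsel : ∀ x ys, (∃ j, sel x ys = ys j) ∧ ∀ j, rhat x (ys j) ≤ rhat x (sel x ys)) :
    ∑ x, Px x * ∑ ys : Fin N → Y, (∏ j, π₀ x (ys j)) *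
        (if sel x ys ∈ Ystar x then (1 : ℝ) else 0) ≥
      1 - ((2 * N / σ) * (∑ x, ∑ y, Px x * π₀ x y * |rhat x y - r x y|)
            + ∑ x, Px x * (1 - ∑ y ∈ Finset.univ.filter (· ∈ Ystar x), π₀ x y) ^ N) := by
  calc _ = ∑ x, Px x * (1 - ((2 * N / σ) * (∑ y, π₀ x y * |rhat x y - r x y|) +
          (1 - ∑ y ∈ univ.filter (· ∈ Ystar x), π₀ x y) ^ N)) := by
        simp_rw [mul_sub, mul_add, mul_sum, mul_one]
        rw [sum_sub_distrib, hPx1, sum_add_distrib]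
        congr 2
        exact sum_congr rfl fun x _ => sum_congr rfl fun y _ => by ring
    _ ≤ _ := sum_le_sum fun x _ => mul_le_mul_of_nonneg_left
        (one_sub_le_bestOfN_prob_mem (hπ0 x) (hπ1 x) hσ (hmargin x) (sel x) (hsel x)) (hPx0 x)

open Classical in
/-- general Best-of-N bound. With a σ-margin reward `r`, base policy `π₀`,
estimated reward `r̂` (with error `δ(x,y) = r̂(x,y) − r(x,y)`), coverage
`P₀(x) = P_{y∼π₀(·|x)}(y ∈ Y*(x))`, and a BoN selection rule `sel` returning one of the
`N` drawn responses maximizing `r̂(x,·)`, the probability that BoN outputs an element of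
the argmax set `Y*(x)` is at least
`1 − (2N/σ)·E|δ| − E_x (1−P₀(x))^N`. -/
theorem best_of_n_general_bound
    {X Y : Type*} [Fintype X] [Fintype Y] [Nonempty Y]
    (Px : X → ℝ) (hPx0 : ∀ x, 0 ≤ Px x) (hPx1 : ∑ x, Px x = 1)
    (π₀ : X → Y → ℝ) (hπ0 : ∀ x y, 0 ≤ π₀ x y) (hπ1 : ∀ x, ∑ y, π₀ x y = 1)
    (r rhat : X → Y → ℝ) (hr : ∀ x y, r x y ∈ Set.Icc (0 : ℝ) 1)
    (σ : ℝ) (hσ : 0 < σ)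
    (Ystar : X → Set Y) (hYstar : ∀ x, Ystar x = {y | ∀ y', r x y' ≤ r x y})
    (hmargin : ∀ x, ∀ y ∈ Ystar x, ∀ y', y' ∉ Ystar x → r x y' + σ < r x y)
    (N : ℕ)
    (sel : X → (Fin N → Y) → Y)
    (hsel : ∀ x ys, (∃ j, sel x ys = ys j) ∧ ∀ j, rhat x (ys j) ≤ rhat x (sel x ys)) :
    ∑ x, Px x * ∑ ys : Fin N → Y, (∏ j, π₀ x (ys j)) *
        (if sel x ys ∈ Ystar x then (1 : ℝ) else 0) ≥
      1 - ((2 * N / σ) * (∑ x, ∑ y, Px x * π₀ x y * |rhat x y - r x y|)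
            + ∑ x, Px x * (1 - ∑ y ∈ Finset.univ.filter (· ∈ Ystar x), π₀ x y) ^ N) :=
  best_of_n_general_bound_general Px hPx0 hPx1 π₀ hπ0 hπ1 r rhat σ hσ Ystar hmargin N sel hsel
end

section
/- Let F be a finite class of binary reward predictors with r_{f*} ∈ F realizable by the data, and let r̂ be ERM over n i.i.d. samples. Then with probability at least 1−δ, the error of r̂ is at most log(|F|/δ)/n, and hence BoN with coverage α and N = −log(n)/log(1−α) achieves expected reward at least 1 − [ log(n)(log|F| + log(1/δ)) / (−log(1−α)·n) + 1/n ]. -/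
/-!
Realizability makes every ERM consistent with `rstar` on the sample, and a fixed predictor with
error `ε'` is consistent on `n` i.i.d. draws with probability `(1 - ε')ⁿ ≤ exp (-n ε')`; a union
bound over `F` shows that the ERM error exceeds `ε = log (|F| / δ) / n` with probability at most
`|F| exp (-n ε) = δ`. On the complementary event, Best-of-`N` fails at a prompt only if all `N`
draws miss `rstar` (probability `≤ (1 - α)ᴺ = 1 / n`) or the learned predictor disagrees with
`rstar` on one of them (probability `≤ N ε` by another union bound).
-/

open Finset Real

section ProductWeights

variable {Z : Type*} [Fintype Z] {n : ℕ}

theorem sum_pi_prod_mul_boole_forall (p : Z → ℝ) (P : Z → Prop) [DecidablePred P] :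
    ∑ s : Fin n → Z, (∏ i, p (s i)) * (if ∀ i, P (s i) then 1 else 0) =
      (∑ z, p z * if P z then 1 else 0) ^ n := by
  rw [Fintype.sum_pow]
  refine sum_congr rfl fun s _ => ?_
  rw [prod_mul_distrib, Fintype.prod_boole]
  congr!

theorem sum_pi_prod_eq_one {p : Z → ℝ} (hp : ∑ z, p z = 1) :
    ∑ s : Fin n → Z, ∏ i, p (s i) = 1 := by
  rw [← Fintype.sum_pow, hp, one_pow]

theorem sum_pi_prod_mul_apply {p : Z → ℝ} (hp : ∑ z, p z = 1) (g : Z → ℝ) (j : Fin n) :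
    ∑ s : Fin n → Z, (∏ i, p (s i)) * g (s j) = ∑ z, p z * g z := by
  have hsplit : ∀ s : Fin n → Z,
      (∏ i, p (s i)) * g (s j) = ∏ i, p (s i) * if i = j then g (s i) else 1 := by
    intro s
    rw [prod_mul_distrib, prod_ite_eq' univ j, if_pos (mem_univ j)]
  rw [sum_congr rfl fun s _ => hsplit s,
    ← Fintype.prod_sum fun i z => p z * if i = j then g z else 1]
  simp [mul_ite, hp]

end ProductWeights

theorem one_le_sum_boole_of_exists {ι : Type*} {S : Finset ι} {Q : ι → Prop} [DecidablePred Q]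
    (h : ∃ i ∈ S, Q i) : (1 : ℝ) ≤ ∑ i ∈ S, if Q i then 1 else 0 := by
  rw [sum_boole, Nat.one_le_cast]
  exact card_pos.2 (filter_nonempty_iff.2 h)

theorem sum_mul_boole_eq_one_sub {Ω : Type*} [Fintype Ω] {w : Ω → ℝ} (hw : ∑ ω, w ω = 1)
    (P : Ω → Prop) [DecidablePred P] :
    ∑ ω, w ω * (if P ω then 1 else 0) = 1 - ∑ ω, w ω * if ¬P ω then 1 else 0 := by
  rw [eq_sub_iff_add_eq, ← sum_add_distrib]
  refine (sum_congr rfl fun ω _ => ?_).trans hw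
  split_ifs <;> simp

section Disagreement

variable {Z : Type*} [Fintype Z]

def disagreement (D : Z → ℝ) (f g : Z → Bool) : ℝ :=
  ∑ z, D z * if f z ≠ g z then 1 else 0

theorem sum_mul_agree_eq_one_sub_disagreement {D : Z → ℝ} (hD1 : ∑ z, D z = 1) (f g : Z → Bool) :
    ∑ z, D z * (if f z = g z then 1 else 0) = 1 - disagreement D f g :=
  sum_mul_boole_eq_one_sub hD1 _

theorem prob_agree_on_sample {D : Z → ℝ} (hD1 : ∑ z, D z = 1) (f g : Z → Bool) (n : ℕ) :
    ∑ s : Fin n → Z, (∏ i, D (s i)) * (if ∀ i, f (s i) = g (s i) then 1 else 0) =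
      (1 - disagreement D f g) ^ n := by
  rw [← sum_mul_agree_eq_one_sub_disagreement hD1,
    sum_pi_prod_mul_boole_forall D fun z => f z = g z]

theorem prob_agree_on_sample_le_exp {D : Z → ℝ} (hD0 : ∀ z, 0 ≤ D z) (hD1 : ∑ z, D z = 1)
    (f g : Z → Bool) (n : ℕ) :
    ∑ s : Fin n → Z, (∏ i, D (s i)) * (if ∀ i, f (s i) = g (s i) then 1 else 0) ≤
      exp (-(n * disagreement D f g)) := by
  have hagree : 0 ≤ 1 - disagreement D f g := by
    rw [← sum_mul_agree_eq_one_sub_disagreement hD1]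
    exact sum_nonneg fun z _ => mul_nonneg (hD0 z) (by positivity)
  rw [prob_agree_on_sample hD1, neg_mul_eq_mul_neg, exp_nat_mul]
  exact pow_le_pow_left₀ hagree (one_sub_le_exp_neg _) n

end Disagreement

theorem one_sub_le_prob_erm_disagreement_le {Z : Type*} [Fintype Z] {D : Z → ℝ}
    (hD0 : ∀ z, 0 ≤ D z) (hD1 : ∑ z, D z = 1) {F : Finset (Z → Bool)} {rstar : Z → Bool}
    (hrstar : rstar ∈ F) {n : ℕ} (hn : 0 < n) {δ : ℝ} (hδ : 0 < δ)
    (erm : (Fin n → Z) → Z → Bool)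
    (herm : ∀ s, erm s ∈ F ∧ ∀ rf ∈ F,
      (∑ i, if erm s (s i) ≠ rstar (s i) then (1 : ℕ) else 0) ≤
      (∑ i, if rf (s i) ≠ rstar (s i) then (1 : ℕ) else 0)) :
    1 - δ ≤ ∑ s : Fin n → Z, (∏ i, D (s i)) *
      if disagreement D (erm s) rstar ≤ log (#F / δ) / n then 1 else 0 := by
  set ε := log (#F / δ) / n
  have hF : (0 : ℝ) < #F := by exact_mod_cast card_pos.2 ⟨rstar, hrstar⟩
  have hw0 : ∀ s : Fin n → Z, 0 ≤ ∏ i, D (s i) := fun s => prod_nonneg fun i _ => hD0 (s i)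
  have hconsistent : ∀ s i, erm s (s i) = rstar (s i) := by
    intro s
    simpa using (herm s).2 rstar hrstar
  have hbad : ∑ s : Fin n → Z, (∏ i, D (s i)) *
      (if ¬disagreement D (erm s) rstar ≤ ε then 1 else 0) ≤ δ := by
    calc _ ≤ ∑ s : Fin n → Z, (∏ i, D (s i)) * ∑ f ∈ F with ε < disagreement D f rstar,
            if ∀ i, f (s i) = rstar (s i) then 1 else 0 := by
          gcongr with s
          · exact hw0 s
          split_ifs with h
          · positivity
          · exact one_le_sum_boole_of_exists
              ⟨erm s, mem_filter.2 ⟨(herm s).1, not_le.1 h⟩, hconsistent s⟩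
      _ = ∑ f ∈ F with ε < disagreement D f rstar, ∑ s : Fin n → Z,
            (∏ i, D (s i)) * if ∀ i, f (s i) = rstar (s i) then 1 else 0 := by
          simp_rw [mul_sum]
          exact sum_comm
      _ ≤ ∑ f ∈ F with ε < disagreement D f rstar, exp (-(n * ε)) := by
          gcongr with f hf
          refine (prob_agree_on_sample_le_exp hD0 hD1 f rstar n).trans (exp_le_exp.2 ?_)
          gcongr
          exact (mem_filter.1 hf).2.le
      _ ≤ #F * exp (-(n * ε)) := by
          rw [sum_const, nsmul_eq_mul]
          gcongr
          exact filter_subset _ F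
      _ = δ := by
          rw [mul_div_cancel₀ _ (by positivity : (n : ℝ) ≠ 0), exp_neg, exp_log (by positivity)]
          field_simp
  rw [sum_mul_boole_eq_one_sub (sum_pi_prod_eq_one hD1)]
  linarith

section BestOfN

variable {Y : Type*} {N : ℕ}

theorem all_miss_or_exists_disagree {rh rs : Y → Bool} {ys : Fin N → Y} {y : Y}
    (hy : ∃ j, y = ys j) (hbest : (∃ j, rh (ys j)) → rh y) (hmiss : ¬rs y) :
    (∀ j, ¬rs (ys j)) ∨ ∃ j, rh (ys j) ≠ rs (ys j) := by
  by_contra! h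
  obtain ⟨⟨j, hj⟩, hagree⟩ := h
  obtain ⟨k, rfl⟩ := hy
  have hrh : rh (ys j) := by rwa [hagree j]
  exact hmiss (by rw [← hagree k]; exact hbest ⟨j, hrh⟩)

theorem one_sub_le_prob_bon_success [Fintype Y] {p : Y → ℝ} (hp0 : ∀ y, 0 ≤ p y)
    (hp1 : ∑ y, p y = 1) {rh rs : Y → Bool} {α : ℝ}
    (hcov : α ≤ ∑ y, p y * if rs y then 1 else 0) (sel : (Fin N → Y) → Y)
    (hsel : ∀ ys, (∃ j, sel ys = ys j) ∧ ((∃ j, rh (ys j)) → rh (sel ys))) :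
    1 - ((1 - α) ^ N + N * disagreement p rh rs) ≤
      ∑ ys : Fin N → Y, (∏ j, p (ys j)) * if rs (sel ys) then 1 else 0 := by
  have hw0 : ∀ ys : Fin N → Y, 0 ≤ ∏ j, p (ys j) := fun ys => prod_nonneg fun j _ => hp0 (ys j)
  have hfail : ∑ ys : Fin N → Y, (∏ j, p (ys j)) * (if ¬rs (sel ys) then 1 else 0) ≤
      ∑ ys : Fin N → Y, (∏ j, p (ys j)) * (if ∀ j, ¬rs (ys j) then 1 else 0) +
        ∑ ys : Fin N → Y, (∏ j, p (ys j)) * ∑ j, if rh (ys j) ≠ rs (ys j) then 1 else 0 := by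
    rw [← sum_add_distrib]
    gcongr with ys
    rw [← mul_add]
    gcongr
    · exact hw0 ys
    have hsum0 : (0 : ℝ) ≤ ∑ j, if rh (ys j) ≠ rs (ys j) then 1 else 0 := by positivity
    by_cases hmiss : rs (sel ys)
    · rw [if_neg (not_not.2 hmiss)]
      positivity
    rw [if_pos hmiss]
    obtain hall | ⟨j, hj⟩ := all_miss_or_exists_disagree (hsel ys).1 (hsel ys).2 hmiss
    · rw [if_pos hall]
      linarith
    · exact le_add_of_nonneg_of_le (by positivity)
        (one_le_sum_boole_of_exists ⟨j, mem_univ j, hj⟩)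
  have hallmiss : ∑ ys : Fin N → Y, (∏ j, p (ys j)) * (if ∀ j, ¬rs (ys j) then 1 else 0) ≤
      (1 - α) ^ N := by
    have hmiss := sum_mul_boole_eq_one_sub hp1 fun y => rs y
    rw [sum_pi_prod_mul_boole_forall p fun y => ¬rs y]
    gcongr
    · exact sum_nonneg fun y _ => mul_nonneg (hp0 y) (by positivity)
    · linarith
  have hunion : ∑ ys : Fin N → Y, (∏ j, p (ys j)) * ∑ j, (if rh (ys j) ≠ rs (ys j) then 1 else 0) =
      N * disagreement p rh rs := by
    simp_rw [mul_sum]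
    rw [sum_comm]
    simp_rw [sum_pi_prod_mul_apply hp1 (fun y => if rh y ≠ rs y then 1 else 0)]
    simp [disagreement]
  rw [sum_mul_boole_eq_one_sub (sum_pi_prod_eq_one hp1)]
  linarith

end BestOfN

theorem disagreement_prod {X Y : Type*} [Fintype X] [Fintype Y] (Px : X → ℝ)
    (π₀ : X → Y → ℝ) (f g : X × Y → Bool) :
    disagreement (fun z => Px z.1 * π₀ z.1 z.2) f g =
      ∑ x, Px x * disagreement (π₀ x) (fun y => f (x, y)) (fun y => g (x, y)) := by
  simp only [disagreement, Fintype.sum_prod_type, mul_sum, mul_assoc]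

theorem one_sub_le_expected_bon_success {X Y : Type*} [Fintype X] [Fintype Y] {N : ℕ}
    {Px : X → ℝ} (hPx0 : ∀ x, 0 ≤ Px x) (hPx1 : ∑ x, Px x = 1)
    {π₀ : X → Y → ℝ} (hπ0 : ∀ x y, 0 ≤ π₀ x y) (hπ1 : ∀ x, ∑ y, π₀ x y = 1)
    {rh rstar : X × Y → Bool} {α : ℝ}
    (hcov : ∀ x, α ≤ ∑ y, π₀ x y * if rstar (x, y) then 1 else 0)
    (sel : X → (Fin N → Y) → Y)
    (hsel : ∀ x ys, (∃ j, sel x ys = ys j) ∧ ((∃ j, rh (x, ys j)) → rh (x, sel x ys))) :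
    1 - ((1 - α) ^ N + N * disagreement (fun z => Px z.1 * π₀ z.1 z.2) rh rstar) ≤
      ∑ x, Px x * ∑ ys : Fin N → Y, (∏ j, π₀ x (ys j)) *
        if rstar (x, sel x ys) then 1 else 0 := by
  calc _ = ∑ x, Px x * (1 - ((1 - α) ^ N + N * disagreement (π₀ x)
          (fun y => rh (x, y)) (fun y => rstar (x, y)))) := by
        simp only [disagreement_prod, mul_sum, mul_left_comm (N : ℝ), mul_sub, mul_add,
          sum_sub_distrib, sum_add_distrib, ← sum_mul, hPx1, one_mul]
    _ ≤ _ := by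
        gcongr with x
        · exact hPx0 x
        exact one_sub_le_prob_bon_success (hπ0 x) (hπ1 x) (hcov x) (sel x) (hsel x)

theorem one_sub_pow_eq_one_div {α : ℝ} (hα0 : 0 < α) (hα1 : α < 1) {n N : ℕ} (hn : 0 < n)
    (hN : (N : ℝ) = -log n / log (1 - α)) : (1 - α) ^ N = 1 / n := by
  have hlog : log (1 - α) ≠ 0 := (log_neg (by linarith) (by linarith)).ne
  rw [← exp_log (by linarith : 0 < 1 - α), ← exp_nat_mul, hN, div_mul_cancel₀ _ hlog, exp_neg,
    exp_log (by exact_mod_cast hn), one_div]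

open Classical in
theorem finite_class_erm_reward_and_bon_general
    {X Y : Type*} [Fintype X] [Fintype Y]
    (Px : X → ℝ) (hPx0 : ∀ x, 0 ≤ Px x) (hPx1 : ∑ x, Px x = 1)
    (π₀ : X → Y → ℝ) (hπ0 : ∀ x y, 0 ≤ π₀ x y) (hπ1 : ∀ x, ∑ y, π₀ x y = 1)
    (F : Finset (X × Y → Bool)) (rstar : X × Y → Bool) (hrstar : rstar ∈ F)
    (n N : ℕ) (hn : 1 ≤ n) (δ α : ℝ) (hδ0 : 0 < δ)
    (hα0 : 0 < α) (hα1 : α < 1)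
    (hcov : ∀ x, α ≤ ∑ y, π₀ x y * (if rstar (x, y) then (1 : ℝ) else 0))
    (hN : (N : ℝ) = -Real.log n / Real.log (1 - α))
    (erm : (Fin n → X × Y) → (X × Y → Bool))
    (herm : ∀ s, erm s ∈ F ∧ ∀ rf ∈ F,
      (∑ i, if erm s (s i) ≠ rstar (s i) then (1 : ℕ) else 0) ≤
      (∑ i, if rf (s i) ≠ rstar (s i) then (1 : ℕ) else 0))
    (sel : (X × Y → Bool) → X → (Fin N → Y) → Y)
    (hsel : ∀ rh x ys, (∃ j, sel rh x ys = ys j) ∧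
      ((∃ j, rh (x, ys j) = true) → rh (x, sel rh x ys) = true)) :
    ∑ s : Fin n → X × Y, (∏ i, Px (s i).1 * π₀ (s i).1 (s i).2) *
      (if ((∑ x, ∑ y, Px x * π₀ x y * (if erm s (x, y) ≠ rstar (x, y) then (1 : ℝ) else 0))
              ≤ Real.log ((F.card : ℝ) / δ) / n
            ∧ (∑ x, Px x * ∑ ys : Fin N → Y, (∏ j, π₀ x (ys j)) *
                  (if rstar (x, sel (erm s) x ys) then (1 : ℝ) else 0)) ≥
              1 - (Real.log n * (Real.log (F.card) + Real.log (1 / δ)) /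
                     (-Real.log (1 - α) * n) + 1 / n))
        then (1 : ℝ) else 0) ≥ 1 - δ := by
  set D : X × Y → ℝ := fun z => Px z.1 * π₀ z.1 z.2
  have hD0 (z : X × Y) : 0 ≤ D z := mul_nonneg (hPx0 z.1) (hπ0 z.1 z.2)
  have hD1 : ∑ z, D z = 1 := by
    simp only [D, Fintype.sum_prod_type, ← mul_sum, hπ1, mul_one, hPx1]
  have herr (f : X × Y → Bool) :
      ∑ x, ∑ y, Px x * π₀ x y * (if f (x, y) ≠ rstar (x, y) then (1 : ℝ) else 0) =
        disagreement D f rstar := by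
    rw [disagreement, Fintype.sum_prod_type]
  have hF : (0 : ℝ) < F.card := by exact_mod_cast card_pos.2 ⟨rstar, hrstar⟩
  have hrate : log n * (log F.card + log (1 / δ)) / (-log (1 - α) * n) =
      N * (log (F.card / δ) / n) := by
    rw [hN, log_div hF.ne' hδ0.ne', one_div, log_inv]
    ring
  have hbon (s : Fin n → X × Y) (hs : disagreement D (erm s) rstar ≤ log (F.card / δ) / n) :
      1 - (log n * (log F.card + log (1 / δ)) / (-log (1 - α) * n) + 1 / n) ≤
        ∑ x, Px x * ∑ ys : Fin N → Y, (∏ j, π₀ x (ys j)) *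
          (if rstar (x, sel (erm s) x ys) then 1 else 0) := by
    refine le_trans ?_ (one_sub_le_expected_bon_success hPx0 hPx1 hπ0 hπ1 hcov _ (hsel (erm s)))
    rw [hrate, one_sub_pow_eq_one_div hα0 hα1 hn hN, add_comm _ (1 / (n : ℝ))]
    gcongr
  refine (one_sub_le_prob_erm_disagreement_le hD0 hD1 hrstar hn hδ0 erm herm).trans_eq
    (sum_congr rfl fun s _ => ?_)
  congr 1
  refine if_congr ?_ rfl rfl
  rw [herr]
  exact ⟨fun h => ⟨h, hbon s h⟩, And.left⟩

open Classical in
/-- finite-class realizable reward learning + BoN. With probability at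
least `1−δ` over `n` i.i.d. samples, the ERM `r̂` over the finite class `F ∋ r_{f*}`
has error at most `log(|F|/δ)/n`, and BoN with coverage `α` and
`N = −log(n)/log(1−α)` has expected reward at least
`1 − [log(n)(log|F| + log(1/δ))/(−log(1−α)·n) + 1/n]`. -/
theorem finite_class_erm_reward_and_bon
    {X Y : Type*} [Fintype X] [Fintype Y] [Nonempty X] [Nonempty Y]
    (Px : X → ℝ) (hPx0 : ∀ x, 0 ≤ Px x) (hPx1 : ∑ x, Px x = 1)
    (π₀ : X → Y → ℝ) (hπ0 : ∀ x y, 0 ≤ π₀ x y) (hπ1 : ∀ x, ∑ y, π₀ x y = 1)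
    (F : Finset (X × Y → Bool)) (rstar : X × Y → Bool) (hrstar : rstar ∈ F)
    (n N : ℕ) (hn : 1 ≤ n) (δ α : ℝ) (hδ0 : 0 < δ) (hδ1 : δ < 1)
    (hα0 : 0 < α) (hα1 : α < 1)
    (hcov : ∀ x, α ≤ ∑ y, π₀ x y * (if rstar (x, y) then (1 : ℝ) else 0))
    (hN : (N : ℝ) = -Real.log n / Real.log (1 - α))
    (erm : (Fin n → X × Y) → (X × Y → Bool))
    (herm : ∀ s, erm s ∈ F ∧ ∀ rf ∈ F,
      (∑ i, if erm s (s i) ≠ rstar (s i) then (1 : ℕ) else 0) ≤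
      (∑ i, if rf (s i) ≠ rstar (s i) then (1 : ℕ) else 0))
    (sel : (X × Y → Bool) → X → (Fin N → Y) → Y)
    (hsel : ∀ rh x ys, (∃ j, sel rh x ys = ys j) ∧
      ((∃ j, rh (x, ys j) = true) → rh (x, sel rh x ys) = true)) :
    ∑ s : Fin n → X × Y, (∏ i, Px (s i).1 * π₀ (s i).1 (s i).2) *
      (if ((∑ x, ∑ y, Px x * π₀ x y * (if erm s (x, y) ≠ rstar (x, y) then (1 : ℝ) else 0))
              ≤ Real.log ((F.card : ℝ) / δ) / n
            ∧ (∑ x, Px x * ∑ ys : Fin N → Y, (∏ j, π₀ x (ys j)) *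
                  (if rstar (x, sel (erm s) x ys) then (1 : ℝ) else 0)) ≥
              1 - (Real.log n * (Real.log (F.card) + Real.log (1 / δ)) /
                     (-Real.log (1 - α) * n) + 1 / n))
        then (1 : ℝ) else 0) ≥ 1 - δ :=
  finite_class_erm_reward_and_bon_general Px hPx0 hPx1 π₀ hπ0 hπ1 F rstar hrstar n N hn δ α hδ0 hα0
    hα1 hcov hN erm herm sel hsel
end

section
/- There exists a finite class F = {f₁, f₂} of next-token predictors on bit strings, a point mass P_x on the prompt (0,1), and a target f* with f*^AR((0,1)) = (0,0,...,0) (length T ≥ 2) such that: (i) sup_{f∈F} E_{P_x} r_{f*}(x, f^AR(x)) = 1 for the end-token reward, yet (ii) for every n ≥ 1, with probability 1 over training data D_n = (x_i, f*^AR(x_i))_{i=1}^n, the next-token-prediction ERM f̂_ntp over F satisfies E_{P_x} r_{f*}(x, f̂_ntp^AR(x)) = 0. -/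
open Finset

/-- The paper's `f₁`, with `true` for the bit `1`. -/
def majority (σ : List Bool) : Bool := decide (σ.count false ≤ σ.count true)

/-- The paper's `f₂`, extended by `0` to strings without a `1`. -/
def exactlyOne (σ : List Bool) : Bool := decide (σ.count true = 1)

/-- Number of mistakes of `f` when it predicts the first `T` tokens of `y` after the prompt
`x`, each from the true prefix (teacher forcing). -/
def nextTokenLoss (f : List Bool → Bool) (x y : List Bool) (T : ℕ) : ℕ :=
  ∑ t ∈ range T, if f (x ++ y.take t) ≠ y.getD t false then 1 else 0

lemma getLastD_replicate {α : Type*} (a d : α) {T : ℕ} (hT : T ≠ 0) :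
    (List.replicate T a).getLastD d = a := by
  simp [List.getLast?_replicate, hT]

lemma arList_const (b : Bool) (x : List Bool) (T : ℕ) :
    arList (fun _ => b) x T = List.replicate T b := by
  induction T with
  | zero => rfl
  | succ T ih => rw [arList, ih, List.replicate_succ']

lemma arList_majority {x : List Bool} (hx : x.count false ≤ x.count true) (T : ℕ) :
    arList majority x T = List.replicate T true := by
  induction T with
  | zero => rfl
  | succ T ih =>
    have hmaj : majority (x ++ List.replicate T true) = true := by
      simp [majority, List.count_replicate]
      omega
    rw [arList, ih, hmaj, List.replicate_succ']

lemma arList_exactlyOne {x : List Bool} (hx : x.count true = 1) (T : ℕ) :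
    arList exactlyOne x (T + 1) = true :: List.replicate T false := by
  induction T with
  | zero => simp [arList, exactlyOne, hx]
  | succ T ih =>
    have hsecond : exactlyOne (x ++ true :: List.replicate T false) = false := by
      simp [exactlyOne, List.count_replicate, hx]
    rw [arList, ih, hsecond, List.replicate_succ']
    rfl

lemma nextTokenLoss_replicate_false (f : List Bool → Bool) (x : List Bool) (T : ℕ) :
    nextTokenLoss f x (List.replicate T false) T =
      #{t ∈ range T | f (x ++ List.replicate t false) = true} := by
  rw [nextTokenLoss, card_filter]
  refine sum_congr rfl fun t ht => ?_
  have htT : t < T := mem_range.mp ht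
  simp [List.take_replicate, min_eq_left htT.le, List.getD_eq_getElem?_getD, htT]

lemma nextTokenLoss_majority {x : List Bool} (hx : x.count false = x.count true) {T : ℕ}
    (hT : T ≠ 0) : nextTokenLoss majority x (List.replicate T false) T = 1 := by
  have herrs : {t ∈ range T | majority (x ++ List.replicate t false) = true} = {0} := by
    simp [majority, List.count_replicate, hx, Nat.pos_of_ne_zero hT]
  rw [nextTokenLoss_replicate_false, herrs, card_singleton]

lemma nextTokenLoss_exactlyOne {x : List Bool} (hx : x.count true = 1) (T : ℕ) :
    nextTokenLoss exactlyOne x (List.replicate T false) T = T := by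
  have herrs : {t ∈ range T | exactlyOne (x ++ List.replicate t false) = true} = range T := by
    simp [exactlyOne, List.count_replicate, hx]
  rw [nextTokenLoss_replicate_false, herrs, card_range]

/-- there is a two-element class `F = {f₁, f₂}`, a point-mass prompt
distribution on `x₀ = (0,1)` and a target `f*` with `f*^AR(x₀) = 0^T`, such that some
member of `F` attains end-token reward 1, yet for every sample size `n ≥ 1` (with
probability 1, since the data `(x₀, f*^AR(x₀))` is deterministic) every next-token
ERM over `F` has end-token reward 0. -/
theorem sft_fails_agnostic (T : ℕ) (hT : 2 ≤ T) :
    ∃ (f₁ f₂ fstar : List Bool → Bool) (x₀ : List Bool),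
      f₁ ≠ f₂ ∧ x₀ = [false, true] ∧
      arList fstar x₀ T = List.replicate T false ∧
      (∃ f ∈ ({f₁, f₂} : Set (List Bool → Bool)),
        (arList f x₀ T).getLastD true = (arList fstar x₀ T).getLastD true) ∧
      (∀ n : ℕ, 1 ≤ n → ∀ fhat ∈ ({f₁, f₂} : Set (List Bool → Bool)),
        (∀ g ∈ ({f₁, f₂} : Set (List Bool → Bool)),
          (∑ _i ∈ Finset.range n, ∑ t ∈ Finset.range T,
            if fhat (x₀ ++ (arList fstar x₀ T).take t) ≠ (arList fstar x₀ T).getD t false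
            then (1 : ℕ) else 0) ≤
          (∑ _i ∈ Finset.range n, ∑ t ∈ Finset.range T,
            if g (x₀ ++ (arList fstar x₀ T).take t) ≠ (arList fstar x₀ T).getD t false
            then (1 : ℕ) else 0)) →
        (arList fhat x₀ T).getLastD true ≠ (arList fstar x₀ T).getLastD true) := by
  obtain ⟨k, rfl⟩ : ∃ k, T = k + 1 := ⟨T - 1, by omega⟩
  have hstar := arList_const false [false, true] (k + 1)
  have hlast : (List.replicate (k + 1) false).getLastD true = false :=
    getLastD_replicate _ _ k.succ_ne_zero
  refine ⟨majority, exactlyOne, fun _ => false, [false, true],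
    fun h => absurd (congrFun h []) (by decide), rfl, hstar, ?_, ?_⟩
  · refine ⟨exactlyOne, Set.mem_insert_of_mem _ rfl, ?_⟩
    rw [arList_exactlyOne rfl, hstar, List.getLastD_cons, hlast,
      getLastD_replicate _ _ (by omega)]
  · intro n hn fhat hfhat herm
    rw [hstar, hlast]
    rcases hfhat with rfl | rfl
    · rw [arList_majority (by decide), getLastD_replicate _ _ k.succ_ne_zero]
      decide
    · have hle := herm majority (Set.mem_insert _ _)
      simp only [hstar, sum_const, card_range, smul_eq_mul] at hle
      change n * nextTokenLoss exactlyOne _ _ _ ≤ n * nextTokenLoss majority _ _ _ at hle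
      rw [nextTokenLoss_exactlyOne rfl, nextTokenLoss_majority rfl k.succ_ne_zero] at hle
      have := Nat.le_of_mul_le_mul_left hle hn
      omega
end

section
/- Let S ⊆ Y be a 'false positive' set under verifier r̂ and true reward r (i.e., r̂ = 1, r = 0 on S), let π₀ be a base distribution with π₀(S) = β, and suppose BoN with verifier r̂ returns a uniformly random element of the r̂-argmax among N i.i.d. draws. Then for any c ∈ [0, N], the probability that the BoN output has true reward 0 is at least (c/N)·P( Bin(N, β) ≥ c ). In particular, if β ≥ 1/16 then taking c = N/16 yields P_{y ∼ π_BoN}(r(y)=0) ≥ (1/16)². -/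
/-!
Every element of `S` attains the top verifier score `true`, so all draws landing in `S` are among
the at most `N` maximizers. With `K` the number of such draws, the conditional failure
probability of BoN given the draws is therefore at least `K / N`. Pointwise
`K / N ≥ (c / N) · 𝟙[K ≥ c]`, which gives the first bound; and `K / N` has expectation exactly
`β`, so the failure probability is at least `β ≥ 1/16 ≥ (1/16)²`.
-/

open Finset

section Marginal

variable {ι Y : Type*} [Fintype ι] [DecidableEq ι] [Fintype Y] {w : Y → ℝ}

theorem sum_prod_mul_apply_eq (hw : ∑ y, w y = 1) (f : Y → ℝ) (j : ι) :
    ∑ ys : ι → Y, (∏ i, w (ys i)) * f (ys j) = ∑ y, w y * f y := by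
  have hfactor : ∀ ys : ι → Y,
      (∏ i, w (ys i)) * f (ys j) = ∏ i, w (ys i) * (if i = j then f (ys i) else 1) := by
    intro ys
    rw [prod_mul_distrib, prod_ite_eq' univ j, if_pos (mem_univ j)]
  have hfactor_sum : ∀ i, ∑ y, w y * (if i = j then f y else 1)
      = if i = j then ∑ y, w y * f y else 1 := by
    intro i
    by_cases h : i = j <;> simp [h, hw]
  rw [sum_congr rfl fun ys _ => hfactor ys,
    ← Fintype.prod_sum (fun i y => w y * (if i = j then f y else 1))]
  simp_rw [hfactor_sum]
  simp

theorem sum_prod_mul_card_filter_eq (hw : ∑ y, w y = 1) (p : Y → Prop) [DecidablePred p] :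
    ∑ ys : ι → Y, (∏ i, w (ys i)) * (#{j | p (ys j)} : ℝ)
      = Fintype.card ι * ∑ y ∈ univ.filter p, w y := by
  simp_rw [card_filter]
  push_cast
  simp_rw [mul_sum]
  rw [sum_comm]
  simp_rw [sum_prod_mul_apply_eq hw (fun y => if p y then (1 : ℝ) else 0), sum_filter]
  simp [mul_sum, mul_ite]

end Marginal

section BestOfN

variable {ι : Type*} [Fintype ι]

def boolArgmax (b : ι → Bool) : Finset ι := {j | ∀ j', b j' → b j}

theorem boolArgmax_nonempty [Nonempty ι] (b : ι → Bool) : (boolArgmax b).Nonempty := by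
  by_cases h : ∃ j, b j
  · obtain ⟨j, hj⟩ := h
    exact ⟨j, by simp [boolArgmax, hj]⟩
  · exact ⟨Classical.arbitrary ι, mem_filter.2 ⟨mem_univ _, fun j' hj' => absurd ⟨j', hj'⟩ h⟩⟩

theorem card_filter_div_card_le_card_filter_boolArgmax_div [Nonempty ι] (b q : ι → Bool)
    (p : ι → Prop) [DecidablePred p] (hp : ∀ j, p j → b j = true ∧ q j = false) :
    (#{j | p j} : ℝ) / Fintype.card ι ≤
      (#{j ∈ boolArgmax b | q j = false} : ℝ) / #(boolArgmax b) := by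
  have hsub : #{j | p j} ≤ #{j ∈ boolArgmax b | q j = false} :=
    card_le_card fun j hj => by
      obtain ⟨hb, hq⟩ := hp j (mem_filter.1 hj).2
      simp [boolArgmax, hb, hq]
  gcongr
  · exact_mod_cast (boolArgmax_nonempty b).card_pos
  · exact card_le_univ _

end BestOfN

open Classical in
theorem bon_false_positive_lower_bound_general
    {Y : Type*} [Fintype Y]
    (π₀ : Y → ℝ) (hπ0 : ∀ y, 0 ≤ π₀ y) (hπ1 : ∑ y, π₀ y = 1)
    (rhat r : Y → Bool)
    (S : Set Y) (hS : S = {y | rhat y = true ∧ r y = false})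
    (β : ℝ) (hβ : β = ∑ y ∈ Finset.univ.filter (· ∈ S), π₀ y)
    (N : ℕ) (hN : 1 ≤ N) :
    (∀ c : ℝ, 0 ≤ c → c ≤ N →
      (∑ ys : Fin N → Y, (∏ j, π₀ (ys j)) *
        (((Finset.univ.filter (fun j : Fin N =>
              (∀ j', (rhat (ys j') → rhat (ys j))) ∧ r (ys j) = false)).card : ℝ) /
         ((Finset.univ.filter (fun j : Fin N =>
              ∀ j', (rhat (ys j') → rhat (ys j)))).card : ℝ))) ≥
      (c / N) * ∑ ys : Fin N → Y, (∏ j, π₀ (ys j)) *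
        (if c ≤ ((Finset.univ.filter (fun j : Fin N => ys j ∈ S)).card : ℝ)
         then (1 : ℝ) else 0)) ∧
    (1 / 16 ≤ β →
      (∑ ys : Fin N → Y, (∏ j, π₀ (ys j)) *
        (((Finset.univ.filter (fun j : Fin N =>
              (∀ j', (rhat (ys j') → rhat (ys j))) ∧ r (ys j) = false)).card : ℝ) /
         ((Finset.univ.filter (fun j : Fin N =>
              ∀ j', (rhat (ys j') → rhat (ys j)))).card : ℝ))) ≥ (1 / 16) ^ 2) := by
  have : NeZero N := ⟨by omega⟩
  have hw : ∀ ys : Fin N → Y, 0 ≤ ∏ j, π₀ (ys j) := fun ys => prod_nonneg fun j _ => hπ0 (ys j)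
  have hratio : ∀ ys : Fin N → Y, (#{j | ys j ∈ S} : ℝ) / N ≤
      (#{j | (∀ j', rhat (ys j') → rhat (ys j)) ∧ r (ys j) = false} : ℝ) /
        #{j | ∀ j', rhat (ys j') → rhat (ys j)} := fun ys => by
    simpa [boolArgmax, filter_filter] using
      card_filter_div_card_le_card_filter_boolArgmax_div (rhat ∘ ys) (r ∘ ys) (fun j => ys j ∈ S)
        (fun j hj => by simpa [hS] using hj)
  refine ⟨fun c hc0 _ => ?_, fun hβ16 => ?_⟩
  · rw [ge_iff_le, mul_sum]
    refine sum_le_sum fun ys _ => ?_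
    rw [mul_left_comm]
    refine mul_le_mul_of_nonneg_left ?_ (hw ys)
    split_ifs with hc
    · rw [mul_one]
      exact (div_le_div_of_nonneg_right hc N.cast_nonneg).trans (hratio ys)
    · rw [mul_zero]
      positivity
  · calc (1 / 16 : ℝ) ^ 2 ≤ β := by linarith
      _ = ∑ ys : Fin N → Y, (∏ j, π₀ (ys j)) * ((#{j | ys j ∈ S} : ℝ) / N) := by
        simp_rw [← mul_div_assoc, ← sum_div, sum_prod_mul_card_filter_eq hπ1 (· ∈ S),
          Fintype.card_fin, hβ]
        field_simp
      _ ≤ _ := sum_le_sum fun ys _ => mul_le_mul_of_nonneg_left (hratio ys) (hw ys)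

open Classical in
/-- BoN false-positive lower bound. Let `S` be the set of false
positives of the verifier `r̂` against the true binary reward `r`, with base-model
mass `β = π₀(S)`. BoN draws `N` i.i.d. responses and returns a uniformly random
element of the `r̂`-argmax among them. Then for every `c ∈ [0,N]`, the probability
that the output has true reward 0 is at least `(c/N)·P(Bin(N,β) ≥ c)`; in
particular, if `β ≥ 1/16` then the failure probability is at least `(1/16)²`. -/
theorem bon_false_positive_lower_bound
    {Y : Type*} [Fintype Y] [Nonempty Y]
    (π₀ : Y → ℝ) (hπ0 : ∀ y, 0 ≤ π₀ y) (hπ1 : ∑ y, π₀ y = 1)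
    (rhat r : Y → Bool)
    (S : Set Y) (hS : S = {y | rhat y = true ∧ r y = false})
    (β : ℝ) (hβ : β = ∑ y ∈ Finset.univ.filter (· ∈ S), π₀ y)
    (N : ℕ) (hN : 1 ≤ N) :
    (∀ c : ℝ, 0 ≤ c → c ≤ N →
      (∑ ys : Fin N → Y, (∏ j, π₀ (ys j)) *
        (((Finset.univ.filter (fun j : Fin N =>
              (∀ j', (rhat (ys j') → rhat (ys j))) ∧ r (ys j) = false)).card : ℝ) /
         ((Finset.univ.filter (fun j : Fin N =>
              ∀ j', (rhat (ys j') → rhat (ys j)))).card : ℝ))) ≥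
      (c / N) * ∑ ys : Fin N → Y, (∏ j, π₀ (ys j)) *
        (if c ≤ ((Finset.univ.filter (fun j : Fin N => ys j ∈ S)).card : ℝ)
         then (1 : ℝ) else 0)) ∧
    (1 / 16 ≤ β →
      (∑ ys : Fin N → Y, (∏ j, π₀ (ys j)) *
        (((Finset.univ.filter (fun j : Fin N =>
              (∀ j', (rhat (ys j') → rhat (ys j))) ∧ r (ys j) = false)).card : ℝ) /
         ((Finset.univ.filter (fun j : Fin N =>
              ∀ j', (rhat (ys j') → rhat (ys j)))).card : ℝ))) ≥ (1 / 16) ^ 2) :=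
  bon_false_positive_lower_bound_general π₀ hπ0 hπ1 rhat r S hS β hβ N hN
end
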